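/- For 0 < q < 1, 0 < z < 1, and n ≥ 0, the identity I_n(q;z)·(z^{n+1}/(q;q)_{n+1} - z^n/(q;q)_n) + z^{2n+1}/((q;q)_n (q;q)_{n+1}) = Σ_{k=0}^∞ (q^{n+1} - q^{n+k+2})/((q;q)_{n+1}(q;q)_{n+k+2}) · z^{2n+2+k} holds. -/

import Mathlib

open Finset Filter Topology

noncomputable def qPoch (q : ℝ) (m : ℕ) : ℝ := ∏ j ∈ Finset.range m, (1 - q ^ (j + 1))

/-- Tail of the q-exponential e(q;z) starting at index m; I_n(q;z) = qexpTail q z (n+1). -/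
noncomputable def qexpTail (q z : ℝ) (m : ℕ) : ℝ := ∑' k : ℕ, z ^ (m + k) / qPoch q (m + k)

/-! With `t m = z ^ m / (q;q)_m` and `I = ∑_{k ≥ 0} t (n + 1 + k)`, the left-hand side is
`I * t (n + 1) - (I - t (n + 1)) * t n`, a difference of two series whose `k`-th terms are
`t (n + 1 + k) * t (n + 1)` and `t (n + 2 + k) * t n`. Both products carry `z ^ (2n + 2 + k)`,
and `(q;q)_{m+1} = (q;q)_m (1 - q^{m+1})` brings them to the common denominator
`(q;q)_{n+1} (q;q)_{n+k+2}`, where the numerators differ by `q^{n+1} - q^{n+k+2}`. -/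

theorem tsum_nat_add_mul_sub_add_mul {R : Type*} [Ring R] [TopologicalSpace R]
    [IsTopologicalRing R] [T2Space R] {f : ℕ → R} (hf : Summable f) (n : ℕ) :
    (∑' k, f (n + 1 + k)) * (f (n + 1) - f n) + f (n + 1) * f n =
      ∑' k, (f (n + 1 + k) * f (n + 1) - f (n + 2 + k) * f n) := by
  have hshift : ∀ m, Summable fun k => f (m + k) := fun m => by
    simpa only [add_comm] using (summable_nat_add_iff m).mpr hf
  calc (∑' k, f (n + 1 + k)) * (f (n + 1) - f n) + f (n + 1) * f n
      = (∑' k, f (n + 1 + k) * f (n + 1)) - ((∑' k, f (n + 1 + k) * f n) - f (n + 1) * f n) := by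
        rw [(hshift _).tsum_mul_right, (hshift _).tsum_mul_right, mul_sub]
        abel
    _ = (∑' k, f (n + 1 + k) * f (n + 1)) - ∑' k, f (n + 2 + k) * f n := by
        rw [((hshift (n + 1)).mul_right (f n)).tsum_eq_zero_add]
        simp only [add_zero, add_sub_cancel_left, show ∀ k, n + 1 + (k + 1) = n + 2 + k by omega]
    _ = ∑' k, (f (n + 1 + k) * f (n + 1) - f (n + 2 + k) * f n) :=
        (((hshift _).mul_right _).tsum_sub ((hshift _).mul_right _)).symm

theorem qPoch_succ (q : ℝ) (m : ℕ) : qPoch q (m + 1) = qPoch q m * (1 - q ^ (m + 1)) :=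
  prod_range_succ _ m

theorem one_sub_pow_pos {q : ℝ} (hq : |q| < 1) {j : ℕ} (hj : j ≠ 0) : 0 < 1 - q ^ j := by
  have : |q ^ j| < 1 := by rw [abs_pow]; exact pow_lt_one₀ (abs_nonneg q) hq hj
  linarith [le_abs_self (q ^ j)]

theorem qPoch_pos {q : ℝ} (hq : |q| < 1) (m : ℕ) : 0 < qPoch q m :=
  prod_pos fun j _ => one_sub_pow_pos hq j.succ_ne_zero

theorem pow_succ_div_qPoch_succ (q z : ℝ) (k : ℕ) :
    z ^ (k + 1) / qPoch q (k + 1) = z ^ k / qPoch q k * (z / (1 - q ^ (k + 1))) := by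
  rw [pow_succ, qPoch_succ, mul_div_mul_comm]

theorem summable_pow_div_qPoch {q z : ℝ} (hq : |q| < 1) (hz : |z| < 1) :
    Summable fun k => z ^ k / qPoch q k := by
  have hratio : Tendsto (fun k : ℕ => ‖z / (1 - q ^ (k + 1))‖) atTop (𝓝 |z|) := by
    have hpow : Tendsto (fun k : ℕ => q ^ (k + 1)) atTop (𝓝 0) :=
      (tendsto_pow_atTop_nhds_zero_of_abs_lt_one hq).comp (tendsto_add_atTop_nat 1)
    simpa using ((tendsto_const_nhds (x := z)).div (tendsto_const_nhds.sub hpow)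
      (by norm_num : (1 : ℝ) - 0 ≠ 0)).norm
  refine summable_of_ratio_norm_eventually_le (r := (1 + |z|) / 2) (by linarith) ?_
  filter_upwards [hratio.eventually_lt_const (by linarith : |z| < (1 + |z|) / 2)] with k hk
  rw [pow_succ_div_qPoch_succ, norm_mul, mul_comm]
  gcongr

theorem pow_div_qPoch_mul_sub {q : ℝ} (hq : |q| < 1) (z : ℝ) (n k : ℕ) :
    z ^ (n + 1 + k) / qPoch q (n + 1 + k) * (z ^ (n + 1) / qPoch q (n + 1)) -
        z ^ (n + 2 + k) / qPoch q (n + 2 + k) * (z ^ n / qPoch q n) =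
      (q ^ (n + 1) - q ^ (n + k + 2)) / (qPoch q (n + 1) * qPoch q (n + k + 2)) *
        z ^ (2 * n + 2 + k) := by
  rw [show n + k + 2 = n + 1 + k + 1 by omega, show n + 2 + k = n + 1 + k + 1 by omega,
    qPoch_succ q (n + 1 + k), qPoch_succ q n]
  have := qPoch_pos hq n
  have := qPoch_pos hq (n + 1 + k)
  have := one_sub_pow_pos hq n.succ_ne_zero
  have := one_sub_pow_pos hq (n + 1 + k).succ_ne_zero
  field_simp
  ring

theorem I_linear_identity (q z : ℝ) (n : ℕ) (hq0 : 0 < q) (hq1 : q < 1)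
    (hz0 : 0 < z) (hz1 : z < 1) :
    qexpTail q z (n + 1) * (z ^ (n + 1) / qPoch q (n + 1) - z ^ n / qPoch q n) +
        z ^ (2 * n + 1) / (qPoch q n * qPoch q (n + 1)) =
      ∑' k : ℕ, (q ^ (n + 1) - q ^ (n + k + 2)) / (qPoch q (n + 1) * qPoch q (n + k + 2)) *
        z ^ (2 * n + 2 + k) := by
  have hq : |q| < 1 := abs_lt.2 ⟨by linarith, hq1⟩
  have hz : |z| < 1 := abs_lt.2 ⟨by linarith, hz1⟩
  have hcross : z ^ (2 * n + 1) / (qPoch q n * qPoch q (n + 1)) =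
      z ^ (n + 1) / qPoch q (n + 1) * (z ^ n / qPoch q n) := by
    rw [div_mul_div_comm, ← pow_add, mul_comm (qPoch q n)]
    ring_nf
  rw [qexpTail, hcross, tsum_nat_add_mul_sub_add_mul (summable_pow_div_qPoch hq hz) n]
  exact tsum_congr fun k => pow_div_qPoch_mul_sub hq z n k
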